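/- Let K be a number field that is a Galois extension of ℚ and is totally real, with r = [K:ℚ]. If f ∈ ℚ[x₁,…,xₙ] is a sum of m squares of polynomials in K[x₁,…,xₙ], then there exist polynomials g₁,…,g_m ∈ ℚ[x₁,…,xₙ], polynomials h₁,…,h_{(r−1)m} ∈ ℚ[x₁,…,xₙ], and strictly positive rational numbers c₁,…,c_{(r−1)m} such that f = Σ_{k=1}^m g_k² + Σ_{j=1}^{(r−1)m} c_j h_j². (That is, f is a positive-rational-weighted sum of r·m squares over ℚ in which at least m of the weights equal 1.) -/

import Mathlib

/-!
Over a totally real number field of degree `r`, the normalized trace `τ = r⁻¹ Tr` makes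
`(x, y) ↦ τ (x y)` a positive definite rational quadratic form with `τ 1 = 1`. Diagonalizing it
on `ker τ` gives `τ (x y) = τ x τ y + ∑ᵢ cᵢ ℓᵢ(x) ℓᵢ(y)` with `r - 1` positive weights `cᵢ`.
Applying `τ` coefficientwise to `f = ∑ₖ gₖ²` fixes `f`, since `τ` is the identity on `ℚ`, and
turns each `gₖ²` into `τ(gₖ)² + ∑ᵢ cᵢ ℓᵢ(gₖ)²`.
-/

open Module

namespace LinearMap.BilinForm

variable {R M ι : Type*} [CommRing R] [AddCommGroup M] [Module R M] [Fintype ι]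

theorem apply_eq_sum_of_isOrthoᵢ {B : LinearMap.BilinForm R M} {v : Basis ι R M}
    (hv : B.IsOrthoᵢ v) (x y : M) :
    B x y = ∑ i, B (v i) (v i) * (v.repr x i * v.repr y i) := by
  classical
  conv_lhs => rw [← v.sum_repr x, ← v.sum_repr y]
  simp only [map_sum, map_smul, LinearMap.sum_apply, LinearMap.smul_apply, smul_eq_mul]
  refine Finset.sum_congr rfl fun i _ => ?_
  rw [Finset.sum_eq_single i (fun j _ hji => by simp [hv hji]) (by simp)]
  ring

variable {F V : Type*} [Field F] [LinearOrder F] [IsStrictOrderedRing F] [AddCommGroup V]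
  [Module F V] [FiniteDimensional F V]

theorem exists_eq_sum_of_pos {B : LinearMap.BilinForm F V} (hB : B.IsSymm)
    (hpos : ∀ x, x ≠ 0 → 0 < B x x) {n : ℕ} (hn : finrank F V = n) :
    ∃ (ℓ : Fin n → Dual F V) (c : Fin n → F), (∀ i, 0 < c i) ∧
      ∀ x y, B x y = ∑ i, c i * (ℓ i x * ℓ i y) := by
  subst hn
  have : Invertible (2 : F) := invertibleOfNonzero two_ne_zero
  obtain ⟨v, hv⟩ := exists_orthogonal_basis (isSymm_iff.1 hB)
  exact ⟨v.coord, fun i => B (v i) (v i), fun i => hpos (v i) (v.ne_zero i),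
    apply_eq_sum_of_isOrthoᵢ hv⟩

theorem exists_eq_mul_add_sum_of_pos {B : LinearMap.BilinForm F V}
    (hB : B.IsSymm) (hpos : ∀ x, x ≠ 0 → 0 < B x x) {e : V} (he : B e e = 1) :
    ∃ (ℓ : Fin (finrank F V - 1) → Dual F V) (c : Fin (finrank F V - 1) → F),
      (∀ i, 0 < c i) ∧ ∀ x y, B x y = B e x * B e y + ∑ i, c i * (ℓ i x * ℓ i y) := by
  have hW : finrank F (LinearMap.ker (B e)) = finrank F V - 1 := by
    have := Dual.finrank_ker_add_one_of_ne_zero (f := B e) fun h => by simp [h] at he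
    omega
  obtain ⟨ℓ, c, hc, hBW⟩ := exists_eq_sum_of_pos (hB.restrict _)
    (fun x hx => hpos x (by simpa using hx)) hW
  have hπ (x : V) : x - B e x • e ∈ LinearMap.ker (B e) := by simp [he]
  let π : V →ₗ[F] LinearMap.ker (B e) :=
    (LinearMap.id - (B e).smulRight e).codRestrict _ hπ
  refine ⟨fun i => ℓ i ∘ₗ π, c, hc, fun x y => ?_⟩
  have hx : x = π x + B e x • e := (sub_add_cancel x _).symm
  have hy : y = π y + B e y • e := (sub_add_cancel y _).symm
  have hex : B e (π x) = 0 := (π x).2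
  have hey : B e (π y) = 0 := (π y).2
  calc B x y = B (π x) (π y) + B e x * B e y := by
        conv_lhs => rw [hx, hy]
        simp only [map_add, map_smul, LinearMap.add_apply, LinearMap.smul_apply, smul_eq_mul,
          hB.eq (π x : V) e, hex, hey, he]
        ring
    _ = _ := by rw [add_comm]; exact congrArg _ (hBW (π x) (π y))

end LinearMap.BilinForm

section NumberField

variable {K : Type*} [Field K] [NumberField K]

theorem trace_mul_self_pos_of_forall_im_eq_zero (hK : ∀ φ : K →+* ℂ, ∀ x : K, (φ x).im = 0)
    {x : K} (hx : x ≠ 0) :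
    0 < Algebra.trace ℚ K (x * x) := by
  have him (σ : K →ₐ[ℚ] ℂ) : (σ x).im = 0 := hK σ x
  have htr : (Algebra.trace ℚ K (x * x) : ℝ) = ∑ σ : K →ₐ[ℚ] ℂ, (σ x).re * (σ x).re := by
    have := congrArg Complex.re (trace_eq_sum_embeddings ℂ (K := ℚ) (x := x * x))
    simpa [Complex.mul_re, him] using this
  obtain σ₀ : K →ₐ[ℚ] ℂ := IsAlgClosed.lift
  have hσ₀ : (σ₀ x).re ≠ 0 := fun h => (map_ne_zero σ₀).2 hx (Complex.ext h (him σ₀))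
  have : (0 : ℝ) < Algebra.trace ℚ K (x * x) := by
    rw [htr]
    exact Finset.sum_pos' (fun σ _ => mul_self_nonneg _)
      ⟨σ₀, Finset.mem_univ _, mul_self_pos.2 hσ₀⟩
  exact_mod_cast this

theorem normalizedTrace_algebraMap_rat (q : ℚ) :
    Algebra.normalizedTrace ℚ K (algebraMap ℚ K q) = q :=
  (Algebra.normalizedTrace_algebraMap_apply ℚ ℚ K q).trans (Algebra.normalizedTrace_self_apply q)

theorem exists_normalizedTrace_mul_eq_add_sum (hK : ∀ φ : K →+* ℂ, ∀ x : K, (φ x).im = 0) :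
    ∃ (ℓ : Fin (finrank ℚ K - 1) → Dual ℚ K) (c : Fin (finrank ℚ K - 1) → ℚ),
      (∀ i, 0 < c i) ∧ ∀ x y : K, Algebra.normalizedTrace ℚ K (x * y) =
        Algebra.normalizedTrace ℚ K x * Algebra.normalizedTrace ℚ K y +
          ∑ i, c i * (ℓ i x * ℓ i y) := by
  have hτ : Algebra.normalizedTrace ℚ K = (finrank ℚ K : ℚ)⁻¹ • Algebra.trace ℚ K :=
    Algebra.normalizedTrace_eq_of_finiteDimensional ℚ K
  let B : LinearMap.BilinForm ℚ K := (LinearMap.mul ℚ K).compr₂ (Algebra.normalizedTrace ℚ K)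
  have hB : B.IsSymm := ⟨fun x y => by simp [B, mul_comm]⟩
  have hpos (x : K) (hx : x ≠ 0) : 0 < B x x := by
    simp only [B, LinearMap.compr₂_apply, LinearMap.mul_apply', hτ, LinearMap.smul_apply,
      smul_eq_mul]
    have := trace_mul_self_pos_of_forall_im_eq_zero hK hx
    have : (0 : ℚ) < finrank ℚ K := by exact_mod_cast finrank_pos
    positivity
  have he : B 1 1 = 1 := by
    simpa [B] using normalizedTrace_algebraMap_rat (K := K) 1
  simpa [B] using LinearMap.BilinForm.exists_eq_mul_add_sum_of_pos hB hpos he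

end NumberField

namespace MvPolynomial

variable {σ R A ι : Type*} [CommSemiring R] [CommSemiring A] [Fintype ι]

theorem addMonoidAlgebraMap_mul (ℓ₀ : A →+ R) (ℓ : ι → A →+ R) (c : ι → R)
    (h : ∀ x y, ℓ₀ (x * y) = ℓ₀ x * ℓ₀ y + ∑ i, c i * (ℓ i x * ℓ i y)) (p q : MvPolynomial σ A) :
    AddMonoidAlgebra.map ℓ₀ (p * q) = AddMonoidAlgebra.map ℓ₀ p * AddMonoidAlgebra.map ℓ₀ q +
      ∑ i, C (c i) * (AddMonoidAlgebra.map (ℓ i) p * AddMonoidAlgebra.map (ℓ i) q) := by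
  classical
  ext d
  simp only [coeff_add, coeff_sum, coeff_C_mul]
  simp only [coeff_mul, coeff_addMonoidAlgebraMap, map_sum, h, Finset.sum_add_distrib,
    Finset.mul_sum]
  rw [Finset.sum_comm]

theorem addMonoidAlgebraMap_map {g : R →+* A} {ℓ : A →+ R} (h : Function.LeftInverse ℓ g)
    (p : MvPolynomial σ R) : AddMonoidAlgebra.map ℓ (map g p) = p := by
  ext d
  rw [coeff_addMonoidAlgebraMap, coeff_map, h]

end MvPolynomial

open MvPolynomial

theorem weighted_sos_descent_general (K : Type*) [Field K] [NumberField K]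
    (htotallyReal : ∀ φ : K →+* ℂ, ∀ x : K, (φ x).im = 0)
    (n m : ℕ) (f : MvPolynomial (Fin n) ℚ)
    (hf : ∃ g : Fin m → MvPolynomial (Fin n) K,
      MvPolynomial.map (algebraMap ℚ K) f = ∑ k, (g k) ^ 2) :
    ∃ (g : Fin m → MvPolynomial (Fin n) ℚ)
      (h : Fin ((Module.finrank ℚ K - 1) * m) → MvPolynomial (Fin n) ℚ)
      (c : Fin ((Module.finrank ℚ K - 1) * m) → ℚ),
      (∀ j, 0 < c j) ∧
      f = ∑ k, (g k) ^ 2 + ∑ j, C (c j) * (h j) ^ 2 := by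
  obtain ⟨g, hg⟩ := hf
  obtain ⟨ℓ, c, hc, hτ⟩ := exists_normalizedTrace_mul_eq_add_sum htotallyReal
  let τ : K →+ ℚ := (Algebra.normalizedTrace ℚ K).toAddMonoidHom
  have hsq (p : MvPolynomial (Fin n) K) : AddMonoidAlgebra.map τ (p ^ 2) =
      AddMonoidAlgebra.map τ p ^ 2 +
        ∑ i, C (c i) * AddMonoidAlgebra.map (ℓ i).toAddMonoidHom p ^ 2 := by
    simpa only [sq] using addMonoidAlgebraMap_mul τ (fun i => (ℓ i).toAddMonoidHom) c hτ p p
  have hf' : f = ∑ k, AddMonoidAlgebra.map τ (g k) ^ 2 +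
      ∑ k, ∑ i, C (c i) * AddMonoidAlgebra.map (ℓ i).toAddMonoidHom (g k) ^ 2 := by
    rw [← addMonoidAlgebraMap_map (ℓ := τ) normalizedTrace_algebraMap_rat f, hg,
      AddMonoidAlgebra.map_sum]
    simp only [hsq, Finset.sum_add_distrib]
  refine ⟨fun k => AddMonoidAlgebra.map τ (g k),
    fun j => AddMonoidAlgebra.map (ℓ (finProdFinEquiv.symm j).1).toAddMonoidHom
      (g (finProdFinEquiv.symm j).2),
    fun j => c (finProdFinEquiv.symm j).1, fun j => hc _, ?_⟩
  rw [hf', ← finProdFinEquiv.sum_comp, Fintype.sum_prod_type, Finset.sum_comm]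
  simp only [Equiv.symm_apply_apply]

/-- If `K` is a totally real Galois number field of degree `r` over `ℚ` and
`f ∈ ℚ[x₁,…,xₙ]` is a sum of `m` squares in `K[x₁,…,xₙ]`, then `f` is a
positive-rational-weighted sum of `r·m` squares over `ℚ` in which at least `m`
of the weights equal `1`:
`f = Σ_{k=1}^m g_k² + Σ_{j=1}^{(r-1)m} c_j h_j²` with `c_j > 0` rational. -/
theorem weighted_sos_descent (K : Type*) [Field K] [NumberField K] [IsGalois ℚ K]
    (htotallyReal : ∀ φ : K →+* ℂ, ∀ x : K, (φ x).im = 0)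
    (n m : ℕ) (f : MvPolynomial (Fin n) ℚ)
    (hf : ∃ g : Fin m → MvPolynomial (Fin n) K,
      MvPolynomial.map (algebraMap ℚ K) f = ∑ k, (g k) ^ 2) :
    ∃ (g : Fin m → MvPolynomial (Fin n) ℚ)
      (h : Fin ((Module.finrank ℚ K - 1) * m) → MvPolynomial (Fin n) ℚ)
      (c : Fin ((Module.finrank ℚ K - 1) * m) → ℚ),
      (∀ j, 0 < c j) ∧
      f = ∑ k, (g k) ^ 2 + ∑ j, C (c j) * (h j) ^ 2 :=
  weighted_sos_descent_general K htotallyReal n m f hf
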